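/- Let Q be an odd positive integer, P ∈ {1,...,Q−1} with gcd(P,Q) = 1, q = exp(iπP/Q), and let n ∈ ℤ. Define c_m = (q^{n−1} + q^{−n+1}) / ((q^{2m+n−1} + q^{−2m−n+1})(q^{2m+n+1} + q^{−2m−n−1})) and d_m = (q^{n−1} + q^{−n+1}) [2m+n]_q / ((q^{2m+n−1} + q^{−2m−n+1})(q^{2m+n+1} + q^{−2m−n−1})) for integers m ≥ 0. Then for every integer m ≥ 1: d_m = −((q^{2m+n−1} + q^{−2m−n+1}) c_m − (q^{2m+n−3} + q^{−2m−n+3}) c_{m−1}) / (q − q⁻¹)². -/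

import Mathlib

/-! If `q^(2N) = 1` with `N` odd, then `q^a + q^(-a) = 0` would give `q^(2a) = -1`, hence
`1 = (q^(2N))^a = (q^(2a))^N = (-1)^N = -1`. So for `q = exp(iπP/Q)`, `Q` odd, all the
denominators are nonzero, and the identity reduces to
`(q^(s-1) + q^(1-s)) - (q^(s+1) + q^(-s-1)) = -(q - q⁻¹)(q^s - q^(-s))` with `s = 2m + n`. -/

/-- The q-number `[x]_q = (q^x − q^(−x))/(q − q⁻¹)`. -/
noncomputable def qnum (q : ℂ) (x : ℤ) : ℂ := (q ^ x - q ^ (-x)) / (q - q⁻¹)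

theorem Complex.exp_pi_mul_I_div_pow_two_mul (P : ℕ) {Q : ℕ} (hQ : Q ≠ 0) :
    Complex.exp (↑Real.pi * Complex.I * (P : ℂ) / (Q : ℂ)) ^ (2 * Q) = 1 := by
  rw [← Complex.exp_nat_mul]
  convert Complex.exp_nat_mul_two_pi_mul_I P using 2
  push_cast
  field_simp

section Field

variable {F : Type*} [Field F]

theorem zpow_add_zpow_neg_ne_zero_of_pow_eq_one (hF : ringChar F ≠ 2) {q : F} {N : ℕ}
    (hN : Odd N) (hq : q ^ (2 * N) = 1) (a : ℤ) : q ^ a + q ^ (-a) ≠ 0 := by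
  have hq0 : q ≠ 0 := by
    rintro rfl
    rw [zero_pow (mul_ne_zero two_ne_zero hN.pos.ne')] at hq
    exact zero_ne_one hq
  intro hsum
  have hsq : q ^ (2 * a) = -1 := by
    have : q ^ (2 * a) + 1 = q ^ a * (q ^ a + q ^ (-a)) := by
      rw [mul_add, ← zpow_add₀ hq0, ← zpow_add₀ hq0, add_neg_cancel, zpow_zero, two_mul]
    rw [hsum, mul_zero] at this
    exact eq_neg_of_add_eq_zero_left this
  have : (-1 : F) = 1 := calc
    (-1 : F) = (q ^ (2 * a)) ^ N := by rw [hsq, hN.neg_one_pow]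
    _ = (q ^ (2 * N)) ^ a := by
      rw [← zpow_natCast, ← zpow_mul, ← zpow_natCast, ← zpow_mul]
      congr 1
      push_cast
      ring
    _ = 1 := by rw [hq, one_zpow]
  exact Ring.neg_one_ne_one_of_char_ne_two hF this

theorem zpow_sub_one_add_sub_zpow_add_one (q : F) (hq : q ≠ 0) (s : ℤ) :
    (q ^ (s - 1) + q ^ (-(s - 1))) - (q ^ (s + 1) + q ^ (-(s + 1)))
      = -(q - q⁻¹) * (q ^ s - q ^ (-s)) := by
  simp only [zpow_sub₀ hq, zpow_add₀ hq, zpow_neg, neg_sub, neg_add, zpow_one]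
  field_simp
  ring

theorem qnum_mul_div_eq_neg_sub_div_sq {q : F} (hsum : ∀ a : ℤ, q ^ a + q ^ (-a) ≠ 0) (K : F) (s : ℤ) :
    K * ((q ^ s - q ^ (-s)) / (q - q⁻¹)) /
        ((q ^ (s - 1) + q ^ (-(s - 1))) * (q ^ (s + 1) + q ^ (-(s + 1))))
      = -((q ^ (s - 1) + q ^ (-(s - 1))) *
            (K / ((q ^ (s - 1) + q ^ (-(s - 1))) * (q ^ (s + 1) + q ^ (-(s + 1)))))
          - (q ^ (s - 3) + q ^ (-(s - 3))) *
            (K / ((q ^ (s - 3) + q ^ (-(s - 3))) * (q ^ (s - 1) + q ^ (-(s - 1))))))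
        / (q - q⁻¹) ^ 2 := by
  have hq : q ≠ 0 := by
    rintro rfl
    simpa using hsum 1
  by_cases hd : q - q⁻¹ = 0
  · -- both sides are junk `_ / 0 = 0`
    simp [hd]
  have rel := zpow_sub_one_add_sub_zpow_add_one q hq s
  have hA := hsum (s - 1)
  have hB := hsum (s + 1)
  have hC := hsum (s - 3)
  generalize q ^ (s - 1) + q ^ (-(s - 1)) = A at *
  generalize q ^ (s + 1) + q ^ (-(s + 1)) = B at *
  generalize q ^ (s - 3) + q ^ (-(s - 3)) = C at *
  generalize q ^ s - q ^ (-s) = X at *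
  generalize q - q⁻¹ = d at *
  field_simp
  linear_combination K * rel

end Field

theorem stmt_14_general (Q P : ℕ) (hQodd : Odd Q)
    (q : ℂ) (hq : q = Complex.exp (↑Real.pi * Complex.I * (P : ℂ) / (Q : ℂ)))
    (n : ℤ) :
    let c : ℕ → ℂ := fun m =>
      (q ^ (n - 1) + q ^ (-n + 1)) /
        ((q ^ (2 * (m : ℤ) + n - 1) + q ^ (-(2 * (m : ℤ)) - n + 1)) *
          (q ^ (2 * (m : ℤ) + n + 1) + q ^ (-(2 * (m : ℤ)) - n - 1)))
    let dd : ℕ → ℂ := fun m =>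
      (q ^ (n - 1) + q ^ (-n + 1)) * qnum q (2 * (m : ℤ) + n) /
        ((q ^ (2 * (m : ℤ) + n - 1) + q ^ (-(2 * (m : ℤ)) - n + 1)) *
          (q ^ (2 * (m : ℤ) + n + 1) + q ^ (-(2 * (m : ℤ)) - n - 1)))
    ∀ m : ℕ, 1 ≤ m →
      dd m = -((q ^ (2 * (m : ℤ) + n - 1) + q ^ (-(2 * (m : ℤ)) - n + 1)) * c m
          - (q ^ (2 * (m : ℤ) + n - 3) + q ^ (-(2 * (m : ℤ)) - n + 3)) * c (m - 1))
        / (q - q⁻¹) ^ 2 := by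
  have hsum : ∀ a : ℤ, q ^ a + q ^ (-a) ≠ 0 :=
    zpow_add_zpow_neg_ne_zero_of_pow_eq_one (by simp) hQodd
      (hq ▸ Complex.exp_pi_mul_I_div_pow_two_mul P hQodd.pos.ne')
  intro c dd m hm
  have key := qnum_mul_div_eq_neg_sub_div_sq hsum (q ^ (n - 1) + q ^ (-n + 1)) (2 * m + n)
  simp only [c, dd, qnum, Nat.cast_sub hm, Nat.cast_one]
  convert key using 6 <;> first | rfl | ring_nf

/-- For `q = exp(iπP/Q)` and `n ∈ ℤ`, with
`c_m = (q^{n−1}+q^{−n+1})/((q^{2m+n−1}+q^{−2m−n+1})(q^{2m+n+1}+q^{−2m−n−1}))` and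
`d_m = [2m+n]_q c_m`, one has, for every `m ≥ 1`,
`d_m = −((q^{2m+n−1}+q^{−2m−n+1}) c_m − (q^{2m+n−3}+q^{−2m−n+3}) c_{m−1})/(q−q⁻¹)²`. -/
theorem stmt_14 (Q P : ℕ) (hQodd : Odd Q) (hQpos : 0 < Q)
    (hP1 : 1 ≤ P) (hPQ : P ≤ Q - 1) (hcop : Nat.Coprime P Q)
    (q : ℂ) (hq : q = Complex.exp (↑Real.pi * Complex.I * (P : ℂ) / (Q : ℂ)))
    (n : ℤ) :
    let c : ℕ → ℂ := fun m =>
      (q ^ (n - 1) + q ^ (-n + 1)) /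
        ((q ^ (2 * (m : ℤ) + n - 1) + q ^ (-(2 * (m : ℤ)) - n + 1)) *
          (q ^ (2 * (m : ℤ) + n + 1) + q ^ (-(2 * (m : ℤ)) - n - 1)))
    let dd : ℕ → ℂ := fun m =>
      (q ^ (n - 1) + q ^ (-n + 1)) * qnum q (2 * (m : ℤ) + n) /
        ((q ^ (2 * (m : ℤ) + n - 1) + q ^ (-(2 * (m : ℤ)) - n + 1)) *
          (q ^ (2 * (m : ℤ) + n + 1) + q ^ (-(2 * (m : ℤ)) - n - 1)))
    ∀ m : ℕ, 1 ≤ m →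
      dd m = -((q ^ (2 * (m : ℤ) + n - 1) + q ^ (-(2 * (m : ℤ)) - n + 1)) * c m
          - (q ^ (2 * (m : ℤ) + n - 3) + q ^ (-(2 * (m : ℤ)) - n + 3)) * c (m - 1))
        / (q - q⁻¹) ^ 2 :=
  stmt_14_general Q P hQodd q hq n
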